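/- arXiv:2210.16490 — 3 statements merged into one kernel-verified Lean document; each statement's English description precedes it below -/
import Mathlib

section
/- Let E be a finite set of size n, let f : E_d → ℝ be harmonic of degree d, and let J ⊆ E. For 0 ≤ i ≤ d define f^{(i)}(J) = ∑_{Z ∈ E_d, |J ∩ Z| = i} f(Z). Then f^{(i)}(J) = (-1)^{d-i} · C(d, i) · f̃(J), where f̃(J) = ∑_{Z ∈ E_d, Z ⊆ J} f(Z). -/
/-!
Summing the harmonicity relations over the `(d - 1)`-sets `Y` with `|Y ∩ J| = i` counts every
`d`-set `Z` with `|Z ∩ J| = i` exactly `d - i` times (drop a point of `Z \ J`) and every one with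
`|Z ∩ J| = i + 1` exactly `i + 1` times (drop a point of `Z ∩ J`). Hence
`(i + 1) f^{(i+1)}(J) + (d - i) f^{(i)}(J) = 0`, and this recurrence, started from
`f^{(d)}(J) = f̃(J)`, is solved by `(-1)^(d-i) C(d,i) f̃(J)`.
-/

open Finset

namespace Finset

variable {α : Type*} [DecidableEq α]

theorem powersetCard_card_sub_one_eq_image_erase {s : Finset α} (hs : s.Nonempty) :
    s.powersetCard (#s - 1) = s.image s.erase := by
  ext t
  simp only [mem_powersetCard, mem_image]
  constructor
  · rintro ⟨hts, ht⟩
    obtain ⟨a, hat, rfl⟩ := exists_eq_insert_iff.2 ⟨hts, by have := hs.card_pos; omega⟩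
    exact ⟨a, mem_insert_self a t, erase_insert hat⟩
  · rintro ⟨a, ha, rfl⟩
    exact ⟨erase_subset a s, card_erase_of_mem ha⟩

theorem card_filter_card_inter_erase (s J : Finset α) (i : ℕ) :
    #{a ∈ s | #(J ∩ s.erase a) = i} =
      (if #(J ∩ s) = i + 1 then i + 1 else 0) + (if #(J ∩ s) = i then #s - i else 0) := by
  have key : ∀ a ∈ s, #(J ∩ s.erase a) = i ↔
      a ∈ J ∧ #(J ∩ s) = i + 1 ∨ a ∉ J ∧ #(J ∩ s) = i := by
    intro a ha
    rw [inter_erase]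
    by_cases haJ : a ∈ J
    · have : 0 < #(J ∩ s) := card_pos.2 ⟨a, mem_inter.2 ⟨haJ, ha⟩⟩
      rw [card_erase_of_mem (mem_inter.2 ⟨haJ, ha⟩)]
      simp only [haJ, true_and, not_true_eq_false, false_and, or_false]
      omega
    · rw [erase_eq_of_notMem fun h => haJ (mem_inter.1 h).1]
      simp [haJ]
  rw [filter_congr key, filter_or,
    card_union_of_disjoint (disjoint_filter.2 fun a _ h h' => h'.1 h.1),
    filter_and, filter_and, filter_const, filter_const]
  have hin : #(s.filter (· ∈ J)) = #(J ∩ s) := by rw [filter_mem_eq_inter, inter_comm]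
  have hout : #(s.filter (· ∉ J)) = #s - #(J ∩ s) := by
    rw [filter_not, filter_mem_eq_inter, card_sdiff_of_subset inter_subset_left, inter_comm]
  split_ifs <;>
    simp only [inter_empty, card_empty, inter_eq_left.2 (filter_subset _ s), hin, hout] <;>
    omega

theorem card_filter_powersetCard_card_sub_one_card_inter {s : Finset α} (hs : s.Nonempty)
    (J : Finset α) (i : ℕ) :
    #{t ∈ s.powersetCard (#s - 1) | #(J ∩ t) = i} =
      (if #(J ∩ s) = i + 1 then i + 1 else 0) + (if #(J ∩ s) = i then #s - i else 0) := by
  rw [powersetCard_card_sub_one_eq_image_erase hs, filter_image,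
    card_image_of_injOn ((erase_injOn s).mono (filter_subset _ _)), card_filter_card_inter_erase]

end Finset

theorem eq_neg_one_pow_mul_choose_mul_of_nsmul_recurrence {K : Type*} [Field K] [CharZero K]
    {d : ℕ} {a : ℕ → K} (h : ∀ k < d, (k + 1) • a (k + 1) + (d - k) • a k = 0)
    {i : ℕ} (hi : i ≤ d) :
    a i = (-1) ^ (d - i) * d.choose i * a d := by
  induction hi using Nat.decreasingInduction with
  | self => simp
  | of_succ k hk ih =>
    have hrec := h k hk
    rw [nsmul_eq_mul, nsmul_eq_mul, ih] at hrec
    have hchoose : (d.choose (k + 1) : K) * (k + 1) = d.choose k * ((d - k : ℕ) : K) := by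
      exact_mod_cast Nat.choose_succ_right_eq d k
    have hsign : (-1 : K) ^ (d - k) = -(-1) ^ (d - (k + 1)) := by
      rw [show d - k = d - (k + 1) + 1 by omega, pow_succ, mul_neg_one]
    refine mul_left_cancel₀ (Nat.cast_ne_zero.2 (by omega : d - k ≠ 0)) ?_
    rw [hsign]
    push_cast at hrec
    linear_combination hrec - (-1 : K) ^ (d - (k + 1)) * a d * hchoose

section Harmonic

variable {ι M : Type*} [Fintype ι] [DecidableEq ι] [AddCommMonoid M]

def IsHarmonic (d : ℕ) (f : Finset ι → M) : Prop :=
  ∀ Y : Finset ι, #Y + 1 = d → ∑ Z with #Z = d ∧ Y ⊆ Z, f Z = 0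

/-- The paper's `f^{(i)}(J)`. -/
def sumInterCard (f : Finset ι → M) (d : ℕ) (J : Finset ι) (i : ℕ) : M :=
  ∑ Z with #Z = d ∧ #(J ∩ Z) = i, f Z

theorem sumInterCard_self (f : Finset ι → M) (d : ℕ) (J : Finset ι) :
    sumInterCard f d J d = ∑ Z ∈ J.powerset with #Z = d, f Z := by
  refine sum_congr (ext fun Z => ?_) fun _ _ => rfl
  simp only [mem_filter, mem_univ, true_and, mem_powerset]
  constructor
  · rintro ⟨hZ, hJZ⟩
    exact ⟨inter_eq_right.1 (eq_of_subset_of_card_le inter_subset_right (by omega)), hZ⟩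
  · rintro ⟨hZJ, hZ⟩
    exact ⟨hZ, by rw [inter_eq_right.2 hZJ, hZ]⟩

theorem IsHarmonic.sumInterCard_recurrence {d : ℕ} {f : Finset ι → M} (hf : IsHarmonic d f)
    (J : Finset ι) {i : ℕ} (hi : i < d) :
    (i + 1) • sumInterCard f d J (i + 1) + (d - i) • sumInterCard f d J i = 0 := by
  let A : Finset (Finset ι) := {Y | #Y + 1 = d ∧ #(J ∩ Y) = i}
  let B : Finset (Finset ι) := {Z | #Z = d}
  calc (i + 1) • sumInterCard f d J (i + 1) + (d - i) • sumInterCard f d J i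
      = ∑ Z ∈ B, ((if #(J ∩ Z) = i + 1 then i + 1 else 0) +
          (if #(J ∩ Z) = i then d - i else 0)) • f Z := by
        simp only [sumInterCard, add_smul, sum_add_distrib, ite_smul, zero_smul, ← sum_filter,
          ← smul_sum, B, filter_filter]
    _ = ∑ Z ∈ B, #(A.bipartiteBelow (· ⊆ ·) Z) • f Z := by
        refine sum_congr rfl fun Z hZ => ?_
        have hZd : #Z = d := (mem_filter.1 hZ).2
        have hZ : Z.Nonempty := card_pos.1 (by omega)
        rw [← hZd, ← card_filter_powersetCard_card_sub_one_card_inter hZ]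
        congr 2
        ext Y
        simp only [bipartiteBelow, A, mem_filter, mem_univ, true_and, mem_powersetCard]
        constructor
        · rintro ⟨⟨hYZ, hY⟩, hJY⟩
          exact ⟨⟨by omega, hJY⟩, hYZ⟩
        · rintro ⟨⟨hY, hJY⟩, hYZ⟩
          exact ⟨⟨hYZ, by omega⟩, hJY⟩
    _ = ∑ Y ∈ A, ∑ Z ∈ B.bipartiteAbove (· ⊆ ·) Y, f Z := by
        rw [sum_sum_bipartiteAbove_eq_sum_sum_bipartiteBelow]
        simp only [sum_const]
    _ = 0 := sum_eq_zero fun Y hY => by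
        rw [bipartiteAbove, filter_filter]
        exact hf Y (mem_filter.1 hY).2.1

end Harmonic

/-- Bachoc's lemma: for `f` harmonic of degree `d`, `J ⊆ E` and `0 ≤ i ≤ d`,
`f^{(i)}(J) = (-1)^(d-i) C(d,i) f̃(J)`. -/
theorem stmt_3 {ι : Type*} [Fintype ι] [DecidableEq ι] (d : ℕ)
    (f : Finset ι → ℝ)
    (hf : ∀ Y : Finset ι, Y.card + 1 = d →
      ∑ Z ∈ Finset.univ.filter (fun Z : Finset ι => Z.card = d ∧ Y ⊆ Z), f Z = 0)
    (J : Finset ι) (i : ℕ) (hi : i ≤ d) :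
    ∑ Z ∈ Finset.univ.filter (fun Z : Finset ι => Z.card = d ∧ (J ∩ Z).card = i), f Z
      = (-1 : ℝ) ^ (d - i) * (d.choose i) *
        ∑ Z ∈ J.powerset.filter (fun Z : Finset ι => Z.card = d), f Z := by
  rw [← sumInterCard_self]
  exact eq_neg_one_pow_mul_choose_mul_of_nsmul_recurrence
    (fun k hk => IsHarmonic.sumInterCard_recurrence hf J hk) hi
end

section
/- Let E be a finite set of size n, let f : E_d → ℝ be harmonic of degree d, and let f̃(X) = ∑_{Z ∈ E_d, Z ⊆ X} f(Z). Then for every subset J ⊆ E, f̃(J) = (-1)^d · f̃(E − J). In particular, f̃(J) = 0 whenever |J| < d or |J| > n − d. -/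
open Finset

private lemma aux_sign_sum {ι : Type*} [DecidableEq ι] (s : Finset ι) :
    ∑ Y ∈ s.powerset, (-1 : ℝ) ^ Y.card = if s = ∅ then 1 else 0 := by
  have h := Finset.sum_powerset_neg_one_pow_card (x := s)
  have h2 : ((∑ Y ∈ s.powerset, (-1 : ℤ) ^ Y.card : ℤ) : ℝ)
      = ∑ Y ∈ s.powerset, (-1 : ℝ) ^ Y.card := by push_cast; rfl
  rw [← h2, h]
  split <;> simp

private lemma aux_harm {ι : Type*} [Fintype ι] [DecidableEq ι] (d : ℕ) (f : Finset ι → ℝ)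
    (hf : ∀ Y : Finset ι, Y.card + 1 = d →
      ∑ Z ∈ Finset.univ.filter (fun Z : Finset ι => Z.card = d ∧ Y ⊆ Z), f Z = 0) :
    ∀ k (Y : Finset ι), Y.card + 1 + k = d →
      ∑ Z ∈ Finset.univ.filter (fun Z : Finset ι => Z.card = d ∧ Y ⊆ Z), f Z = 0 := by
  intro k
  induction k with
  | zero => intro Y hY; exact hf Y (by omega)
  | succ k ih =>
    intro Y hY
    set B := Finset.univ.filter (fun Z : Finset ι => Z.card = d ∧ Y ⊆ Z) with hB
    have key : ∑ Z ∈ B, ((Z \ Y).card : ℝ) * f Z = 0 := by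
      have e1 : ∀ Z ∈ B, ((Z \ Y).card : ℝ) * f Z
          = ∑ y ∈ Finset.univ, if y ∈ Z \ Y then f Z else 0 := by
        intro Z _
        rw [Finset.sum_ite_mem, Finset.univ_inter, Finset.sum_const, nsmul_eq_mul]
      rw [Finset.sum_congr rfl e1, Finset.sum_comm]
      apply Finset.sum_eq_zero
      intro y _
      by_cases hy : y ∈ Y
      · apply Finset.sum_eq_zero; intro Z _
        rw [if_neg]; simp [hy]
      · have e2 : ∑ Z ∈ B, (if y ∈ Z \ Y then f Z else 0)
            = ∑ Z ∈ Finset.univ.filter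
                (fun Z : Finset ι => Z.card = d ∧ insert y Y ⊆ Z), f Z := by
          rw [← Finset.sum_filter]
          apply Finset.sum_congr _ (fun _ _ => rfl)
          rw [hB, Finset.filter_filter]
          apply Finset.filter_congr
          intro Z _
          simp only [Finset.mem_sdiff, Finset.insert_subset_iff]
          tauto
        rw [e2]
        exact ih (insert y Y) (by rw [Finset.card_insert_of_notMem hy]; omega)
    have e3 : ∀ Z ∈ B, ((Z \ Y).card : ℝ) * f Z = ((k : ℝ) + 2) * f Z := by
      intro Z hZ
      rw [hB, Finset.mem_filter] at hZ
      obtain ⟨-, hZd, hYZ⟩ := hZ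
      rw [Finset.card_sdiff_of_subset hYZ, hZd]
      have : d - Y.card = k + 2 := by omega
      rw [this]; push_cast; ring_nf
    rw [Finset.sum_congr rfl e3, ← Finset.mul_sum] at key
    have hk2 : ((k : ℝ) + 2) ≠ 0 := by positivity
    exact (mul_eq_zero.1 key).resolve_left hk2

/-- For `f` harmonic of degree `d` on a set of size `n`, the extension `f̃`
satisfies `f̃(J) = (-1)^d f̃(E - J)` for every `J`; in particular `f̃(J) = 0`
whenever `|J| < d` or `|J| > n - d`. -/
theorem stmt_4 {ι : Type*} [Fintype ι] [DecidableEq ι] (n d : ℕ)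
    (hn : Fintype.card ι = n) (f : Finset ι → ℝ)
    (hf : ∀ Y : Finset ι, Y.card + 1 = d →
      ∑ Z ∈ Finset.univ.filter (fun Z : Finset ι => Z.card = d ∧ Y ⊆ Z), f Z = 0) :
    ∀ J : Finset ι,
      (∑ Z ∈ J.powerset.filter (fun Z : Finset ι => Z.card = d), f Z
        = (-1 : ℝ) ^ d * ∑ Z ∈ Jᶜ.powerset.filter (fun Z : Finset ι => Z.card = d), f Z)
      ∧ ((J.card < d ∨ n - d < J.card) →
          ∑ Z ∈ J.powerset.filter (fun Z : Finset ι => Z.card = d), f Z = 0) := by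
  have hsmall : ∀ K : Finset ι, K.card < d →
      ∑ Z ∈ K.powerset.filter (fun Z : Finset ι => Z.card = d), f Z = 0 := by
    intro K hK
    have he : K.powerset.filter (fun Z : Finset ι => Z.card = d) = ∅ := by
      rw [Finset.filter_eq_empty_iff]
      intro Z hZ hc
      have := Finset.card_le_card (Finset.mem_powerset.1 hZ)
      omega
    rw [he, Finset.sum_empty]
  have hid : ∀ J : Finset ι,
      ∑ Z ∈ J.powerset.filter (fun Z : Finset ι => Z.card = d), f Z
        = (-1 : ℝ) ^ d * ∑ Z ∈ Jᶜ.powerset.filter (fun Z : Finset ι => Z.card = d), f Z := by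
    intro J
    -- step 1: rewrite LHS as a double sum
    have step1 : ∑ Z ∈ J.powerset.filter (fun Z : Finset ι => Z.card = d), f Z
        = ∑ Z ∈ Finset.univ, ∑ Y ∈ Finset.univ,
            (if Z.card = d ∧ Y ⊆ Z ∧ Y ⊆ Jᶜ then (-1 : ℝ) ^ Y.card * f Z else 0) := by
      have hFJ : ∑ Z ∈ J.powerset.filter (fun Z : Finset ι => Z.card = d), f Z
          = ∑ Z ∈ Finset.univ, (if Z.card = d ∧ Z ⊆ J then f Z else 0) := by
        rw [← Finset.sum_filter]
        apply Finset.sum_congr _ (fun _ _ => rfl)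
        ext Z
        simp only [Finset.mem_filter, Finset.mem_powerset, Finset.mem_univ, true_and]
        tauto
      rw [hFJ]
      apply Finset.sum_congr rfl
      intro Z _
      by_cases hZd : Z.card = d
      · have e1 : ∑ Y ∈ Finset.univ,
            (if Z.card = d ∧ Y ⊆ Z ∧ Y ⊆ Jᶜ then (-1 : ℝ) ^ Y.card * f Z else 0)
            = ∑ Y ∈ (Z ∩ Jᶜ).powerset, (-1 : ℝ) ^ Y.card * f Z := by
          rw [← Finset.sum_filter]
          apply Finset.sum_congr _ (fun _ _ => rfl)
          ext Y
          simp only [Finset.mem_filter, Finset.mem_univ, true_and, Finset.mem_powerset,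
            Finset.subset_inter_iff, hZd]
        rw [e1, ← Finset.sum_mul, aux_sign_sum]
        have hiff : Z ∩ Jᶜ = ∅ ↔ Z ⊆ J := by
          simp [Finset.eq_empty_iff_forall_notMem, Finset.subset_iff]
        by_cases hZJ : Z ⊆ J
        · rw [if_pos (hiff.2 hZJ), if_pos ⟨hZd, hZJ⟩, one_mul]
        · rw [if_neg (fun h => hZJ (hiff.1 h)), if_neg (fun h => hZJ h.2), zero_mul]
      · rw [if_neg (fun h => hZd h.1)]
        apply (Finset.sum_eq_zero _).symm
        intro Y _
        rw [if_neg (fun h => hZd h.1)]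
    -- step 2: swap and evaluate
    rw [step1, Finset.sum_comm]
    have step2 : ∀ Y : Finset ι,
        (∑ Z ∈ Finset.univ,
          (if Z.card = d ∧ Y ⊆ Z ∧ Y ⊆ Jᶜ then (-1 : ℝ) ^ Y.card * f Z else 0))
        = (if Y ⊆ Jᶜ ∧ Y.card = d then (-1 : ℝ) ^ d * f Y else 0) := by
      intro Y
      by_cases hY : Y ⊆ Jᶜ
      · have e2 : ∑ Z ∈ Finset.univ,
            (if Z.card = d ∧ Y ⊆ Z ∧ Y ⊆ Jᶜ then (-1 : ℝ) ^ Y.card * f Z else 0)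
            = (-1 : ℝ) ^ Y.card *
              ∑ Z ∈ Finset.univ.filter (fun Z : Finset ι => Z.card = d ∧ Y ⊆ Z), f Z := by
          rw [Finset.mul_sum, ← Finset.sum_filter]
          apply Finset.sum_congr _ (fun _ _ => rfl)
          apply Finset.filter_congr
          intro Z _
          simp [hY]
        rw [e2]
        rcases lt_trichotomy Y.card d with hlt | heq | hgt
        · rw [aux_harm d f hf (d - 1 - Y.card) Y (by omega), mul_zero,
            if_neg (fun h => by omega)]
        · have hone : Finset.univ.filter (fun Z : Finset ι => Z.card = d ∧ Y ⊆ Z) = {Y} := by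
            ext Z
            simp only [Finset.mem_filter, Finset.mem_univ, true_and, Finset.mem_singleton]
            constructor
            · rintro ⟨hZd, hYZ⟩
              exact (Finset.eq_of_subset_of_card_le hYZ (by omega)).symm
            · rintro rfl; exact ⟨heq, Finset.Subset.refl _⟩
          rw [hone, Finset.sum_singleton, if_pos ⟨hY, heq⟩, heq]
        · have he : Finset.univ.filter (fun Z : Finset ι => Z.card = d ∧ Y ⊆ Z) = ∅ := by
            rw [Finset.filter_eq_empty_iff]
            rintro Z _ ⟨hZd, hYZ⟩
            have := Finset.card_le_card hYZ
            omega
          rw [he, Finset.sum_empty, mul_zero, if_neg (fun h => by omega)]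
      · rw [if_neg (fun h => hY h.1)]
        apply Finset.sum_eq_zero
        intro Z _
        rw [if_neg (fun h => hY h.2.2)]
    rw [Finset.sum_congr rfl (fun Y _ => step2 Y), Finset.mul_sum, ← Finset.sum_filter]
    apply Finset.sum_congr _ (fun _ _ => rfl)
    ext Z
    simp only [Finset.mem_filter, Finset.mem_univ, true_and, Finset.mem_powerset]
  intro J
  refine ⟨hid J, ?_⟩
  rintro (h | h)
  · exact hsmall J h
  · rw [hid J]
    have hJn : J.card ≤ n := by rw [← hn]; exact Finset.card_le_univ J
    have hc : Jᶜ.card < d := by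
      rw [Finset.card_compl, hn]
      omega
    rw [hsmall Jᶜ hc, mul_zero]
end

section
/- Let D = (E, s, t) be a demi-matroid. Define s̄(X) = s(E) − s(E − X) and t̄(X) = t(E) − t(E − X). Then the supplement D̄ = (E, s̄, t̄) is also a demi-matroid. -/
open Finset

/-- A demi-matroid on ground set `E`. -/
def IsDemimatroid {ι : Type*} [DecidableEq ι] (E : Finset ι) (s t : Finset ι → ℝ) : Prop :=
  (∀ ⦃X Y : Finset ι⦄, X ⊆ Y → Y ⊆ E →
      (0 ≤ s X ∧ s X ≤ s Y ∧ s Y ≤ Y.card) ∧ (0 ≤ t X ∧ t X ≤ t Y ∧ t Y ≤ Y.card)) ∧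
  (∀ X ⊆ E, ((E \ X).card : ℝ) - s (E \ X) = t E - t X)

/-- The supplement `D̄ = (E, s̄, t̄)`, where `s̄(X) = s(E) - s(E - X)` and
`t̄(X) = t(E) - t(E - X)`, of a demi-matroid `D = (E, s, t)` is a demi-matroid. -/
theorem stmt_6 {ι : Type*} [DecidableEq ι] (E : Finset ι) (s t : Finset ι → ℝ)
    (hD : IsDemimatroid E s t) :
    IsDemimatroid E (fun X => s E - s (E \ X)) (fun X => t E - t (E \ X)) := by
  obtain ⟨h1, h2⟩ := hD
  -- t̄(X) = |X| - s(X) for X ⊆ E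
  have ht' : ∀ X ⊆ E, t E - t (E \ X) = (X.card : ℝ) - s X := by
    intro X hX
    have h := h2 (E \ X) sdiff_subset
    rw [Finset.sdiff_sdiff_eq_self hX] at h
    linarith
  -- |E| - s E = t E - t ∅
  have hE : (E.card : ℝ) - s E = t E - t ∅ := by
    have h := h2 ∅ (empty_subset E)
    simpa using h
  -- s̄(X) = |X| + t ∅ - t X for X ⊆ E
  have hs' : ∀ X ⊆ E, s E - s (E \ X) = (X.card : ℝ) + t ∅ - t X := by
    intro X hX
    have h := h2 X hX
    have hc : ((E \ X).card : ℝ) = (E.card : ℝ) - (X.card : ℝ) := by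
      rw [Finset.card_sdiff_of_subset hX]
      exact_mod_cast Nat.cast_sub (Finset.card_le_card hX)
    rw [hc] at h
    linarith
  constructor
  · intro X Y hXY hYE
    have hXE : X ⊆ E := hXY.trans hYE
    have hd1 : E \ Y ⊆ E \ X := Finset.sdiff_subset_sdiff (Finset.Subset.refl E) hXY
    have hmX := (h1 (Finset.sdiff_subset : E \ X ⊆ E) (Finset.Subset.refl E))
    have hmY := (h1 hd1 (Finset.sdiff_subset : E \ X ⊆ E))
    obtain ⟨⟨_, hsX, _⟩, ⟨_, htX, _⟩⟩ := hmX
    obtain ⟨⟨_, hsY, _⟩, ⟨_, htY, _⟩⟩ := hmY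
    have h0Y : (0 ≤ s Y ∧ _ ∧ _) ∧ (0 ≤ t Y ∧ _ ∧ _) := h1 (Finset.Subset.refl Y) hYE
    have hts : t ∅ ≤ t Y := ((h1 (Finset.empty_subset Y) hYE).2).2.1
    dsimp only
    refine ⟨⟨by linarith, by linarith, ?_⟩, ⟨by linarith, by linarith, ?_⟩⟩
    · have := hs' Y hYE
      linarith
    · have := ht' Y hYE
      have hsY0 : 0 ≤ s Y := h0Y.1.1
      linarith
  · intro X hX
    have h := hs' (E \ X) (Finset.sdiff_subset)
    have hself : E \ E = (∅ : Finset ι) := Finset.sdiff_self E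
    dsimp only
    simp only [hself]
    linarith
end
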